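/- Let U(α) = (u(α), v(α), p(α), ρ(α)) be a C¹ solution of the rarefaction-curve ODE system du = −λ dv, ρ(λu − v) dv = dp, dp = c² dρ, where c² = γp/ρ and λ = λ(u,v,c) is one of the acoustic characteristic speeds (so λ satisfies (u²−c²)λ² − 2uvλ + (v²−c²) = 0), with ρ(α) > 0 and λ(α)u(α) − v(α) ≠ 0 along the curve. If p(0) = ρ(0)^γ, then p(α) = ρ(α)^γ for all α, and the Bernoulli quantity ½(u² + v²) + γp/((γ−1)ρ) is constant along the curve. -/

import Mathlib

open Real

/-- Along a C¹ solution of the rarefaction-curve ODE system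
`du = −λ dv`, `ρ(λu − v) dv = dp`, `dp = c² dρ`, with `c² = γp/ρ` and `λ` an acoustic
characteristic speed (a root of `(u²−c²)λ² − 2uvλ + (v²−c²) = 0`), with `ρ > 0`, `p > 0`
and `λu − v ≠ 0`: if `p(0) = ρ(0)^γ` then `p = ρ^γ` everywhere and the Bernoulli quantity
`½(u²+v²) + γp/((γ−1)ρ)` is constant along the curve. -/
theorem rarefaction_curve_bernoulli_invariance
    (γ : ℝ) (hγ : 1 < γ)
    (u v p ρ lam c : ℝ → ℝ)
    (hu : ContDiff ℝ 1 u) (hv : ContDiff ℝ 1 v)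
    (hp : ContDiff ℝ 1 p) (hρ : ContDiff ℝ 1 ρ)
    (hρpos : ∀ α, 0 < ρ α) (hppos : ∀ α, 0 < p α)
    (hnondeg : ∀ α, lam α * u α - v α ≠ 0)
    (hc : ∀ α, (c α) ^ 2 = γ * p α / ρ α)
    (hquad : ∀ α, (u α ^ 2 - c α ^ 2) * (lam α) ^ 2 - 2 * u α * v α * lam α
      + (v α ^ 2 - c α ^ 2) = 0)
    (ode1 : ∀ α, deriv u α = -(lam α) * deriv v α)
    (ode2 : ∀ α, ρ α * (lam α * u α - v α) * deriv v α = deriv p α)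
    (ode3 : ∀ α, deriv p α = (c α) ^ 2 * deriv ρ α)
    (hinit : p 0 = ρ 0 ^ γ) :
    ∀ α : ℝ, p α = ρ α ^ γ ∧
      (u α ^ 2 + v α ^ 2) / 2 + γ * p α / ((γ - 1) * ρ α)
        = (u 0 ^ 2 + v 0 ^ 2) / 2 + γ * p 0 / ((γ - 1) * ρ 0) := by
  have hγ1 : γ - 1 ≠ 0 := sub_ne_zero.mpr (ne_of_gt hγ)
  have hdu : ∀ α, HasDerivAt u (deriv u α) α := fun α =>
    ((hu.differentiable one_ne_zero) α).hasDerivAt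
  have hdv : ∀ α, HasDerivAt v (deriv v α) α := fun α =>
    ((hv.differentiable one_ne_zero) α).hasDerivAt
  have hdp : ∀ α, HasDerivAt p (deriv p α) α := fun α =>
    ((hp.differentiable one_ne_zero) α).hasDerivAt
  have hdρ : ∀ α, HasDerivAt ρ (deriv ρ α) α := fun α =>
    ((hρ.differentiable one_ne_zero) α).hasDerivAt
  -- key algebraic identity : ρ p' = γ p ρ'
  have key : ∀ α, ρ α * deriv p α = γ * p α * deriv ρ α := by
    intro α
    have h3 := ode3 α
    rw [hc α] at h3
    have := (hρpos α).ne'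
    field_simp at h3
    linarith [h3]
  -- Part 1: p * ρ^(-γ) is constant
  have hf : ∀ α, HasDerivAt (fun α => p α * ρ α ^ (-γ)) 0 α := by
    intro α
    have h1 : HasDerivAt (fun α => ρ α ^ (-γ))
        (deriv ρ α * (-γ) * ρ α ^ (-γ - 1)) α :=
      (hdρ α).rpow_const (Or.inl (hρpos α).ne')
    have h2 := (hdp α).mul h1
    refine h2.congr_deriv (Eq.symm ?_)
    have hsplit : ρ α ^ (-γ) = ρ α ^ (-γ - 1) * ρ α := by
      rw [show (-γ) = (-γ - 1) + 1 by ring, Real.rpow_add (hρpos α), Real.rpow_one]; norm_num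
    rw [hsplit]
    have k := key α
    linear_combination (-(ρ α ^ (-γ - 1))) * k
  have hfdiff : Differentiable ℝ (fun α => p α * ρ α ^ (-γ)) := fun α =>
    (hf α).differentiableAt
  have hfconst : ∀ α, p α * ρ α ^ (-γ) = p 0 * ρ 0 ^ (-γ) := by
    intro α
    exact is_const_of_deriv_eq_zero hfdiff (fun x => (hf x).deriv) α 0
  have hent : ∀ α, p α = ρ α ^ γ := by
    intro α
    have h := hfconst α
    rw [hinit] at h
    have h0 : ρ 0 ^ γ * ρ 0 ^ (-γ) = 1 := by
      rw [← Real.rpow_add (hρpos 0)]; simp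
    rw [h0] at h
    have hαpow : ρ α ^ (-γ) = (ρ α ^ γ)⁻¹ := by
      rw [Real.rpow_neg (hρpos α).le]
    rw [hαpow] at h
    have hpow : (0:ℝ) < ρ α ^ γ := Real.rpow_pos_of_pos (hρpos α) γ
    field_simp at h
    linarith
  -- Part 2: Bernoulli invariant
  have hB : ∀ α, HasDerivAt
      (fun α => (u α ^ 2 + v α ^ 2) / 2 + γ * p α / ((γ - 1) * ρ α)) 0 α := by
    intro α
    have hden : (γ - 1) * ρ α ≠ 0 := mul_ne_zero hγ1 (hρpos α).ne'
    have h1 : HasDerivAt (fun α => (u α ^ 2 + v α ^ 2) / 2)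
        ((2 * u α * deriv u α + 2 * v α * deriv v α) / 2) α := by
      have := (((hdu α).pow 2).add ((hdv α).pow 2)).div_const 2
      simpa [mul_comm, mul_assoc, mul_left_comm] using this
    have h2 : HasDerivAt (fun α => γ * p α / ((γ - 1) * ρ α))
        ((γ * deriv p α * ((γ - 1) * ρ α) - γ * p α * ((γ - 1) * deriv ρ α))
          / ((γ - 1) * ρ α) ^ 2) α := by
      exact ((hdp α).const_mul γ).div ((hdρ α).const_mul (γ - 1)) hden
    have h := h1.add h2
    refine h.congr_deriv (Eq.symm ?_)
    have k := key α
    have e1 := ode1 α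
    have e2 := ode2 α
    have hρne := (hρpos α).ne'
    rw [div_add_div _ _ two_ne_zero (pow_ne_zero 2 hden), eq_comm, div_eq_zero_iff]
    left
    linear_combination (2*(γ-1)^2*(ρ α)^2*(u α)) * e1 + (-2*(γ-1)^2*(ρ α)) * e2
      + (2*(γ-1)) * k
  have hBdiff : Differentiable ℝ
      (fun α => (u α ^ 2 + v α ^ 2) / 2 + γ * p α / ((γ - 1) * ρ α)) := fun α =>
    (hB α).differentiableAt
  intro α
  refine ⟨hent α, ?_⟩
  exact is_const_of_deriv_eq_zero hBdiff (fun x => (hB x).deriv) α 0
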